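/- Let k be a positive integer and \gamma a real number with 1/3 \leq \gamma \leq 1, and let G be a (k+2)-connected graph of order n with n \geq 5k + 3 - 3/(5\gamma - 1) such that |N_G(A)| > \gamma(n - 3k - 2) + k + 2 for every independent set A of G with |A| = \lfloor \gamma(2k+1) \rfloor. Let e be an edge of G, let G' = G - e, and let X be a vertex subset of G' satisfying sun(G' - X) \geq 2|X| - \varepsilon(X) + 1. Then \lfloor \gamma(2k+1) \rfloor \geq i(G - X) + 1, where i(G - X) denotes the number of isolated vertices of G - X. -/

import Mathlib

open SimpleGraph

section Defs

variable {V : Type*} {α β : Type*}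

/-- A graph is *factor-critical* if deleting any vertex leaves a graph
with a perfect matching. -/
def FactorCritical (G : SimpleGraph V) : Prop :=
  ∀ v : V, ∃ M : (G.induce {u | u ≠ v}).Subgraph, M.IsPerfectMatching

/-- A *sun* is `K₁`, `K₂`, or a graph obtained from a factor-critical graph `R`
with vertex set `Y = {y₁, …, yₙ}` by adding `n` new vertices `x₁, …, xₙ` and the
pendant edges `y₁x₁, …, yₙxₙ`. -/
def IsSun (G : SimpleGraph V) : Prop :=
  (Nat.card V = 1) ∨ (Nat.card V = 2 ∧ G.Connected) ∨
  (∃ Y : Set V, Y.Nonempty ∧ FactorCritical (G.induce Y) ∧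
    ∃ f : (Yᶜ : Set V) ≃ Y, ∀ x : (Yᶜ : Set V), G.neighborSet ↑x = {(↑(f x) : V)})

/-- `sunCount G` is the number of connected components of `G` that are suns. -/
noncomputable def sunCount (G : SimpleGraph V) : ℕ :=
  Nat.card {c : G.ConnectedComponent // IsSun (G.induce c.supp)}

/-- Number of isolated vertices of a graph. -/
noncomputable def isolatedCount (G : SimpleGraph V) : ℕ :=
  {v : V | ∀ w : V, ¬ G.Adj v w}.ncard

/-- A set of vertices is independent if no two of its vertices are adjacent. -/
def IndepSet (G : SimpleGraph V) (A : Set V) : Prop :=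
  A.Pairwise fun u v => ¬ G.Adj u v

/-- The independence number of a graph: the maximum size of an independent set. -/
noncomputable def indepNum (G : SimpleGraph V) : ℕ :=
  sSup {n | ∃ A : Set V, IndepSet G A ∧ A.ncard = n}

/-- The neighborhood `N_G(A)` of a set `A` of vertices: the union of the
neighborhoods of the vertices of `A`. -/
def neighborSetOf (G : SimpleGraph V) (A : Set V) : Set V :=
  {v | ∃ a ∈ A, G.Adj a v}

/-- `H` is a `P_{≥3}`-factor of `G`: a spanning subgraph of `G` each of whose
connected components is a path on at least `3` vertices. -/
def IsPathFactor (G H : SimpleGraph V) : Prop :=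
  H ≤ G ∧ ∀ c : H.ConnectedComponent,
    ∃ n : ℕ, 3 ≤ n ∧ Nonempty ((H.induce c.supp) ≃g pathGraph n)

/-- A connected graph `G` is a `P_{≥3}`-factor covered graph if every edge of `G`
is contained in some `P_{≥3}`-factor of `G`. -/
def PathFactorCovered (G : SimpleGraph V) : Prop :=
  G.Connected ∧ ∀ e ∈ G.edgeSet, ∃ H : SimpleGraph V, IsPathFactor G H ∧ e ∈ H.edgeSet

/-- A graph `G` is a `P_{≥3}`-factor uniform graph if `G - e` is a
`P_{≥3}`-factor covered graph for every edge `e` of `G`. -/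
def PathFactorUniform (G : SimpleGraph V) : Prop :=
  ∀ e ∈ G.edgeSet, PathFactorCovered (G.deleteEdges {e})

/-- The parameter `ε(X)` from Zhou–Zhang's characterization of
`P_{≥3}`-factor covered graphs. -/
noncomputable def eps (G : SimpleGraph V) (X : Set V) : ℕ := by
  classical
  exact if ¬ IndepSet G X then 2
    else if X.Nonempty ∧ ∃ c : (G.induce Xᶜ).ConnectedComponent,
        ¬ IsSun ((G.induce Xᶜ).induce c.supp) then 1
    else 0

/-- A graph is 2-edge-connected if it is connected and stays connected after
the deletion of any single edge. -/
def TwoEdgeConnected (G : SimpleGraph V) : Prop :=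
  G.Connected ∧ ∀ e ∈ G.edgeSet, (G.deleteEdges {e}).Connected

/-- A graph is `k`-connected if it has more than `k` vertices and remains
connected after deleting any fewer than `k` vertices. -/
def KConnected [Fintype V] (k : ℕ) (G : SimpleGraph V) : Prop :=
  k < Fintype.card V ∧ ∀ S : Set V, S.ncard < k → (G.induce Sᶜ).Connected

/-- The join `G₁ ∨ G₂` of two graphs: take disjoint copies of `G₁` and `G₂`
and add all edges between them. -/
def graphJoin (G : SimpleGraph α) (H : SimpleGraph β) : SimpleGraph (α ⊕ β) where
  Adj x y :=
    match x, y with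
    | Sum.inl a, Sum.inl b => G.Adj a b
    | Sum.inr a, Sum.inr b => H.Adj a b
    | Sum.inl _, Sum.inr _ => True
    | Sum.inr _, Sum.inl _ => True
  symm := by
    constructor
    rintro (a | a) (b | b) h
    · exact G.adj_symm h
    · trivial
    · trivial
    · exact H.adj_symm h
  loopless := by
    constructor
    rintro (a | a) h
    · exact G.loopless.irrefl a h
    · exact H.loopless.irrefl a h

/-- The disjoint union of two graphs. -/
def graphSum (G : SimpleGraph α) (H : SimpleGraph β) : SimpleGraph (α ⊕ β) where
  Adj x y :=
    match x, y with
    | Sum.inl a, Sum.inl b => G.Adj a b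
    | Sum.inr a, Sum.inr b => H.Adj a b
    | _, _ => False
  symm := by
    constructor
    rintro (a | a) (b | b) h
    · exact G.adj_symm h
    · exact h.elim
    · exact h.elim
    · exact H.adj_symm h
  loopless := by
    constructor
    rintro (a | a) h
    · exact G.loopless.irrefl a h
    · exact H.loopless.irrefl a h

/-- `mK2 m` is the disjoint union of `m` copies of `K₂`. -/
def mK2 (m : ℕ) : SimpleGraph (Fin m × Fin 2) where
  Adj p q := p.1 = q.1 ∧ p.2 ≠ q.2
  symm := by constructor; rintro p q ⟨h1, h2⟩; exact ⟨h1.symm, h2.symm⟩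
  loopless := by constructor; rintro p ⟨h1, h2⟩; exact h2 rfl

end Defs

/-!
Take `⌊γ(2k+1)⌋` isolated vertices of `G - X`: they form an independent set whose
neighbourhood lies in `X`, so `|X| > γ(n - 3k - 2) + k + 2`. On the other hand every sun
component of `G' - X` contains a vertex outside `X` and `ε(X) ≤ 2`, so the sun condition
forces `3|X| ≤ n + 1`. The order bound `n ≥ 5k + 3 - 3/(5γ - 1)` makes these incompatible.
-/

section

variable {V : Type*}

theorem exists_indepSet_ncard_eq_of_le_isolatedCount {G : SimpleGraph V} {X : Set V} {m : ℕ}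
    (hm : m ≤ isolatedCount (G.induce Xᶜ)) :
    ∃ A : Set V, IndepSet G A ∧ A.ncard = m ∧ neighborSetOf G A ⊆ X := by
  obtain ⟨T, hT, rfl⟩ := Set.exists_subset_card_eq hm
  have hisolated : ∀ a ∈ T, ∀ w ∈ Xᶜ, ¬ G.Adj ↑a w := fun a ha w hw hadj =>
    hT ha ⟨w, hw⟩ hadj
  refine ⟨Subtype.val '' T, ?_, Set.ncard_image_of_injective _ Subtype.val_injective, ?_⟩
  · rintro _ ⟨a, ha, rfl⟩ _ ⟨b, -, rfl⟩ - hadj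
    exact hisolated a ha b b.2 hadj
  · rintro v ⟨_, ⟨a, ha, rfl⟩, hadj⟩
    by_contra hv
    exact hisolated a ha v hv hadj

theorem sunCount_le_card [Finite V] (G : SimpleGraph V) : sunCount G ≤ Nat.card V :=
  (Nat.card_le_card_of_injective Subtype.val Subtype.val_injective).trans
    (Nat.card_le_card_of_surjective G.connectedComponentMk fun c => c.exists_rep)

theorem eps_le_two (G : SimpleGraph V) (X : Set V) : eps G X ≤ 2 := by
  unfold eps
  split_ifs <;> norm_num

theorem three_mul_ncard_le_of_sunCount_ge [Finite V] {G : SimpleGraph V} {X : Set V}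
    (hX : (sunCount (G.induce Xᶜ) : ℤ) ≥ 2 * X.ncard - eps G X + 1) :
    3 * X.ncard ≤ Nat.card V + 1 := by
  have hsun : sunCount (G.induce Xᶜ) ≤ Xᶜ.ncard := sunCount_le_card _
  have hcard := Set.ncard_add_ncard_compl X
  have heps := eps_le_two G X
  omega

end

theorem add_one_le_three_mul_of_ge {k n γ : ℝ} (hk : 0 ≤ k) (hγ : 1 / 3 ≤ γ)
    (hn : n ≥ 5 * k + 3 - 3 / (5 * γ - 1)) :
    n + 1 ≤ 3 * (γ * (n - 3 * k - 2) + k + 2) := by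
  have hpos : 0 < 5 * γ - 1 := by linarith
  have hfrac : (3 * γ - 1) * (3 / (5 * γ - 1)) ≤ 3 := by
    rw [mul_div_assoc', div_le_iff₀ hpos]
    linarith
  have hgap : -3 ≤ (3 * γ - 1) * (n - 3 * k - 2) := by
    nlinarith [mul_le_mul_of_nonneg_left hn (by linarith : 0 ≤ 3 * γ - 1)]
  linarith

theorem stmt12_general {V : Type*} [Fintype V] (k : ℕ) (γ : ℝ)
    (hγ1 : 1 / 3 ≤ γ) (G : SimpleGraph V) (n : ℕ)
    (hn : Fintype.card V = n)
    (hord : (n : ℝ) ≥ 5 * k + 3 - 3 / (5 * γ - 1))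
    (hnbr : ∀ A : Set V, IndepSet G A → A.ncard = ⌊γ * (2 * k + 1)⌋₊ →
      ((neighborSetOf G A).ncard : ℝ) > γ * ((n : ℝ) - 3 * k - 2) + k + 2)
    (e : Sym2 V) (X : Set V)
    (hX : (sunCount ((G.deleteEdges {e}).induce Xᶜ) : ℤ) ≥
      2 * X.ncard - eps (G.deleteEdges {e}) X + 1) :
    isolatedCount (G.induce Xᶜ) + 1 ≤ ⌊γ * (2 * k + 1)⌋₊ := by
  by_contra! hfew
  obtain ⟨A, hA, hAcard, hAX⟩ :=
    exists_indepSet_ncard_eq_of_le_isolatedCount (Nat.le_of_lt_succ hfew)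
  have hnbrX : ((neighborSetOf G A).ncard : ℝ) ≤ X.ncard := by
    exact_mod_cast Set.ncard_le_ncard hAX
  have hsmall : 3 * (X.ncard : ℝ) ≤ n + 1 := by
    have h := three_mul_ncard_le_of_sunCount_ge hX
    rw [Nat.card_eq_fintype_card, hn] at h
    exact_mod_cast h
  have hlarge := add_one_le_three_mul_of_ge (Nat.cast_nonneg k) hγ1 hord
  linarith [hnbr A hA hAcard]

/-- **Claim 1 in the proof of Theorem 1.4.** Under the hypotheses of Theorem 1.4,
if `e ∈ E(G)`, `G' = G - e` and `X ⊆ V(G')` satisfies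
`sun(G' - X) ≥ 2|X| - ε(X) + 1`, then `⌊γ(2k+1)⌋ ≥ i(G - X) + 1`. -/
theorem stmt12 {V : Type*} [Fintype V] (k : ℕ) (hk : 1 ≤ k) (γ : ℝ)
    (hγ1 : 1 / 3 ≤ γ) (hγ2 : γ ≤ 1) (G : SimpleGraph V) (n : ℕ)
    (hn : Fintype.card V = n) (hconn : KConnected (k + 2) G)
    (hord : (n : ℝ) ≥ 5 * k + 3 - 3 / (5 * γ - 1))
    (hnbr : ∀ A : Set V, IndepSet G A → A.ncard = ⌊γ * (2 * k + 1)⌋₊ →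
      ((neighborSetOf G A).ncard : ℝ) > γ * ((n : ℝ) - 3 * k - 2) + k + 2)
    (e : Sym2 V) (he : e ∈ G.edgeSet) (X : Set V)
    (hX : (sunCount ((G.deleteEdges {e}).induce Xᶜ) : ℤ) ≥
      2 * X.ncard - eps (G.deleteEdges {e}) X + 1) :
    isolatedCount (G.induce Xᶜ) + 1 ≤ ⌊γ * (2 * k + 1)⌋₊ :=
  stmt12_general k γ hγ1 G n hn hord hnbr e X hX
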